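/- The first moment of Kloosterman sums with square arguments satisfies SK = ∑_{a∈F_q^*, a a square} K(λ;a) = (1/2)·((-1)^r·q + 1). -/

import Mathlib

open Finset

/-- The canonical additive character `λ(x) = e^{2πi·tr(x)/3}` of a finite field of
characteristic 3, where tr is the absolute trace to F_3. -/
noncomputable def canChar (F : Type) [Field F] [Fintype F] [Algebra (ZMod 3) F] (x : F) : ℂ :=
  Complex.exp (2 * Real.pi * Complex.I * ((Algebra.trace (ZMod 3) F x).val : ℂ) / 3)

/-- The Kloosterman sum `K(λ;a) = ∑_{α ∈ F^*} λ(α + a·α⁻¹)` for the canonical character. -/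
noncomputable def kloos (F : Type) [Field F] [Fintype F] [DecidableEq F]
    [Algebra (ZMod 3) F] (a : F) : ℂ :=
  ∑ α ∈ Finset.univ.filter (fun α : F => α ≠ 0), canChar F (α + a * α⁻¹)

/-! Substituting `α = x u` turns `K(x²)` into `∑_{u ≠ 0} ψ(x (u + u⁻¹))`. Summing over `x ≠ 0`
first, orthogonality of the primitive character `ψ` leaves `q N - (q - 1)`, where
`N = #{u | u² = -1} = 1 + χ(-1)` for the quadratic character `χ`. Every nonzero square has exactly
two square roots, so `2 SK = χ(-1) q + 1`, and in characteristic 3 `χ(-1) = χ₄(3^r) = (-1)^r`. -/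

section Kloosterman

variable {F R : Type*} [Field F] [Fintype F] [DecidableEq F] [CommRing R]

def kloosterman (ψ : AddChar F R) (a : F) : R :=
  ∑ α ∈ univ.filter (· ≠ 0), ψ (α + a * α⁻¹)

lemma AddChar.IsPrimitive.sum_mulShift_nonzero [IsDomain R] {ψ : AddChar F R}
    (hψ : ψ.IsPrimitive) (c : F) :
    ∑ x ∈ univ.filter (· ≠ 0), ψ (x * c) = (if c = 0 then (Fintype.card F : R) else 0) - 1 := by
  rw [filter_ne', sum_erase_eq_sub (mem_univ 0), AddChar.sum_mulShift c hψ, zero_mul,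
    AddChar.map_zero_eq_one, Nat.cast_ite, Nat.cast_zero]

lemma kloosterman_sq {ψ : AddChar F R} {x : F} (hx : x ≠ 0) :
    kloosterman ψ (x ^ 2) = ∑ u ∈ univ.filter (· ≠ 0), ψ (x * (u + u⁻¹)) := by
  refine sum_nbij' (x⁻¹ * ·) (x * ·) ?_ ?_ ?_ ?_ ?_ <;> intro α hα <;> rw [mem_filter_univ] at hα
  · exact (mem_filter_univ _).2 (mul_ne_zero (inv_ne_zero hx) hα)
  · exact (mem_filter_univ _).2 (mul_ne_zero hx hα)
  · field_simp
  · field_simp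
  · congr 1
    field_simp

lemma sum_kloosterman_sq [IsDomain R] {ψ : AddChar F R} (hψ : ψ.IsPrimitive) :
    ∑ x ∈ univ.filter (· ≠ 0), kloosterman ψ (x ^ 2)
      = Fintype.card F * #{u : F | u ≠ 0 ∧ u + u⁻¹ = 0} - (Fintype.card F - 1) := by
  rw [sum_congr rfl fun x hx => kloosterman_sq (mem_filter.1 hx).2, sum_comm,
    sum_congr rfl fun u _ => hψ.sum_mulShift_nonzero (u + u⁻¹), sum_sub_distrib, sum_ite,
    sum_const_zero, add_zero, sum_const, filter_filter, sum_const]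
  have hcard : (#{x : F | x ≠ 0} : R) = Fintype.card F - 1 := by
    rw [filter_ne', eq_sub_iff_add_eq, ← Nat.cast_add_one, card_erase_add_one (mem_univ 0),
      card_univ]
  rw [nsmul_eq_mul, nsmul_one, hcard, mul_comm]

lemma card_add_inv_eq_zero (hF : ringChar F ≠ 2) :
    (#{u : F | u ≠ 0 ∧ u + u⁻¹ = 0} : ℤ) = quadraticChar F (-1) + 1 := by
  rw [← quadraticChar_card_sqrts hF, Set.toFinset_ofPred]
  congr 2
  ext u
  simp only [mem_filter, mem_univ, true_and]
  constructor
  · rintro ⟨hu, h⟩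
    field_simp at h
    linear_combination h
  · intro h
    have hu : u ≠ 0 := by
      rintro rfl
      simp at h
    refine ⟨hu, ?_⟩
    field_simp
    linear_combination h

lemma sum_sq_eq_two_nsmul_sum_squares {M : Type*} [AddCommMonoid M] (hF : ringChar F ≠ 2)
    (f : F → M) :
    ∑ x ∈ univ.filter (· ≠ 0), f (x ^ 2)
      = 2 • ∑ a ∈ univ.filter (fun a : F => a ≠ 0 ∧ ∃ x : F, x ≠ 0 ∧ a = x ^ 2), f a := by
  have hmaps : ∀ x ∈ univ.filter (· ≠ 0), x ^ 2 ∈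
      univ.filter (fun a : F => a ≠ 0 ∧ ∃ x : F, x ≠ 0 ∧ a = x ^ 2) := fun x hx => by
    rw [mem_filter_univ] at hx ⊢
    exact ⟨pow_ne_zero 2 hx, x, hx, rfl⟩
  rw [← sum_fiberwise_of_maps_to hmaps, smul_sum]
  refine sum_congr rfl fun a ha => ?_
  obtain ⟨-, y, hy, rfl⟩ := (mem_filter_univ _).1 ha
  have hfiber : (univ.filter (· ≠ 0)).filter (· ^ 2 = y ^ 2) = {y, -y} := by
    ext x
    simp only [mem_filter, mem_univ, true_and, mem_insert, mem_singleton]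
    rw [sq_eq_sq_iff_eq_or_eq_neg, and_iff_right_of_imp]
    rintro (rfl | rfl)
    exacts [hy, neg_ne_zero.2 hy]
  rw [sum_congr rfl fun x hx => congrArg f (mem_filter.1 hx).2, sum_const, hfiber,
    card_pair fun h => hy ((Ring.eq_self_iff_eq_zero_of_char_ne_two hF).1 h.symm)]

theorem two_mul_sum_kloosterman_squares [IsDomain R] {ψ : AddChar F R} (hψ : ψ.IsPrimitive)
    (hF : ringChar F ≠ 2) :
    2 * ∑ a ∈ univ.filter (fun a : F => a ≠ 0 ∧ ∃ x : F, x ≠ 0 ∧ a = x ^ 2), kloosterman ψ a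
      = quadraticChar F (-1) * Fintype.card F + 1 := by
  have hcard := congrArg (Int.cast : ℤ → R) (card_add_inv_eq_zero hF)
  have hsum := sum_sq_eq_two_nsmul_sum_squares hF (kloosterman ψ)
  rw [sum_kloosterman_sq hψ, two_nsmul] at hsum
  push_cast at hcard
  rw [hcard] at hsum
  linear_combination -hsum

end Kloosterman

section CharThree

variable (F : Type) [Field F] [Algebra (ZMod 3) F]

lemma ringChar_ne_two : ringChar F ≠ 2 := by
  have := charP_of_injective_algebraMap (algebraMap (ZMod 3) F).injective 3
  rw [ringChar.eq F 3]
  decide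

variable [Fintype F]

noncomputable def canAddChar : AddChar F ℂ :=
  ZMod.stdAddChar.compAddMonoidHom (Algebra.trace (ZMod 3) F).toAddMonoidHom

lemma canAddChar_apply (x : F) : canAddChar F x = canChar F x := by
  simp [canAddChar, canChar, ZMod.stdAddChar_apply, ZMod.toCircle_apply]

lemma isPrimitive_canAddChar : (canAddChar F).IsPrimitive := by
  refine AddChar.IsPrimitive.of_ne_one (AddChar.ne_one_iff.2 ?_)
  have : Module.Finite (ZMod 3) F := Module.Finite.of_finite
  obtain ⟨x, hx⟩ := Algebra.trace_surjective (ZMod 3) F 1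
  refine ⟨x, ?_⟩
  rw [canAddChar, AddChar.compAddMonoidHom_apply, LinearMap.toAddMonoidHom_coe, hx,
    ← (ZMod.stdAddChar (N := 3)).map_zero_eq_one, ZMod.injective_stdAddChar.ne_iff]
  decide

lemma kloos_eq_kloosterman [DecidableEq F] (a : F) :
    kloos F a = kloosterman (canAddChar F) a := by
  simp only [kloos, kloosterman, canAddChar_apply]

lemma quadraticChar_neg_one_of_card_eq_three_pow [DecidableEq F] {r : ℕ}
    (hF : Fintype.card F = 3 ^ r) : quadraticChar F (-1) = (-1) ^ r := by
  rw [quadraticChar_neg_one (ringChar_ne_two F), hF, Nat.cast_pow, map_pow,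
    ZMod.χ₄_nat_three_mod_four (n := 3) rfl]

end CharThree

theorem first_moment_square_args_general (r : ℕ) (F : Type) [Field F] [Fintype F]
    [DecidableEq F] [Algebra (ZMod 3) F] (hF : Fintype.card F = 3 ^ r) :
    ∑ a ∈ Finset.univ.filter (fun a : F => a ≠ 0 ∧ ∃ x : F, x ≠ 0 ∧ a = x ^ 2),
      kloos F a
      = (1 / 2 : ℂ) * ((-1 : ℂ) ^ r * (3 ^ r : ℂ) + 1) := by
  have h := two_mul_sum_kloosterman_squares (isPrimitive_canAddChar F) (ringChar_ne_two F)
  rw [quadraticChar_neg_one_of_card_eq_three_pow F hF, hF] at h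
  simp only [kloos_eq_kloosterman]
  push_cast at h
  linear_combination h / 2

/-- `SK = ∑_{a ∈ F_q^*, a square} K(λ;a) = (1/2)·((-1)^r·q + 1)`, where q = 3^r. -/
theorem first_moment_square_args (r : ℕ) (hr : 0 < r) (F : Type) [Field F] [Fintype F]
    [DecidableEq F] [Algebra (ZMod 3) F] (hF : Fintype.card F = 3 ^ r) :
    ∑ a ∈ Finset.univ.filter (fun a : F => a ≠ 0 ∧ ∃ x : F, x ≠ 0 ∧ a = x ^ 2),
      kloos F a
      = (1 / 2 : ℂ) * ((-1 : ℂ) ^ r * (3 ^ r : ℂ) + 1) :=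
  first_moment_square_args_general r F hF
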